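/- arXiv:0904.0898 — 3 statements merged into one kernel-verified Lean document; each statement's English description precedes it below -/
import Mathlib

section
/- Let (φ_n)_{n∈J} be an (A₁,B₁)-frame of a Hilbert space H₁ and (ψ_m)_{m∈K} be an (A₂,B₂)-frame of a Hilbert space H₂, with 0 < A_i ≤ B_i < ∞. Then the family (φ_n ⊗ ψ_m)_{(n,m)∈J×K} is an (A₁A₂, B₁B₂)-frame of the Hilbert tensor product H₁ ⊗ H₂. -/
/-!
For `f = ∑ᵢ xᵢ ⊗ yᵢ` put `gₙ = ∑ᵢ ⟪φₙ, xᵢ⟫ yᵢ ∈ H₂`, so that `⟪φₙ ⊗ ψₘ, f⟫ = ⟪ψₘ, gₙ⟫` and the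
`ψ`-frame puts `∑ₘ |⟪φₙ ⊗ ψₘ, f⟫|²` between `A₂‖gₙ‖²` and `B₂‖gₙ‖²`. Expanding in a Hilbert basis
`(e_k)` of `H₂` gives `‖gₙ‖² = ∑ₖ |⟪φₙ, uₖ⟫|²` with `uₖ = ∑ᵢ ⟪e_k, yᵢ⟫ xᵢ` and `∑ₖ ‖uₖ‖² = ‖f‖²`,
so the `φ`-frame puts `∑ₙ ‖gₙ‖²` between `A₁‖f‖²` and `B₁‖f‖²`.

Such finite sums are dense. The upper bound passes to limits through the finite partial sums;
the analysis operator into `ℓ²` is then bounded, so the frame sum is continuous in `f` and the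
lower bound passes to limits as well.
-/

open MeasureTheory

noncomputable section

def IsFrame {H : Type*} [NormedAddCommGroup H] [InnerProductSpace ℂ H]
    {J : Type*} (A B : ℝ) (φ : J → H) : Prop :=
  ∀ f : H, Summable (fun n : J => ‖(inner ℂ (φ n) f : ℂ)‖ ^ 2) ∧
    A * ‖f‖ ^ 2 ≤ ∑' n : J, ‖(inner ℂ (φ n) f : ℂ)‖ ^ 2 ∧
    ∑' n : J, ‖(inner ℂ (φ n) f : ℂ)‖ ^ 2 ≤ B * ‖f‖ ^ 2

open scoped InnerProductSpace ENNReal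

section Frames

variable {H : Type*} [NormedAddCommGroup H] [InnerProductSpace ℂ H] {ι : Type*}

def IsBessel (B : ℝ) (v : ι → H) : Prop :=
  ∀ f : H, Summable (fun i => ‖⟪v i, f⟫_ℂ‖ ^ 2) ∧ ∑' i, ‖⟪v i, f⟫_ℂ‖ ^ 2 ≤ B * ‖f‖ ^ 2

theorem IsBessel.of_dense {B : ℝ} {v : ι → H} {s : Set H} (hs : Dense s)
    (h : ∀ f ∈ s, Summable (fun i => ‖⟪v i, f⟫_ℂ‖ ^ 2) ∧ ∑' i, ‖⟪v i, f⟫_ℂ‖ ^ 2 ≤ B * ‖f‖ ^ 2) :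
    IsBessel B v := by
  have hpartial (t : Finset ι) (f : H) : ∑ i ∈ t, ‖⟪v i, f⟫_ℂ‖ ^ 2 ≤ B * ‖f‖ ^ 2 := by
    induction f using hs.induction with
    | mem f hf => exact ((h f hf).1.sum_le_tsum t fun i _ => sq_nonneg _).trans (h f hf).2
    | isClosed => exact isClosed_le (by fun_prop) (by fun_prop)
  intro f
  exact ⟨summable_of_sum_le (fun i => sq_nonneg _) (hpartial · f),
    Real.tsum_le_of_sum_le (fun i => sq_nonneg _) (hpartial · f)⟩

theorem IsBessel.continuous_tsum {B : ℝ} {v : ι → H} (hv : IsBessel B v) :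
    Continuous fun f => ∑' i, ‖⟪v i, f⟫_ℂ‖ ^ 2 := by
  have hp : (0 : ℝ) < (2 : ℝ≥0∞).toReal := by norm_num
  let T : H →ₗ[ℂ] lp (fun _ : ι => ℂ) 2 :=
    { toFun := fun f => ⟨fun i => ⟪v i, f⟫_ℂ, memℓp_gen (by simpa using (hv f).1)⟩
      map_add' := fun f g => lp.ext <| funext fun i => inner_add_right _ _ _
      map_smul' := fun c f => lp.ext <| funext fun i => inner_smul_right _ _ _ }
  have hT (f : H) : ‖T f‖ ^ 2 = ∑' i, ‖⟪v i, f⟫_ℂ‖ ^ 2 := by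
    have h := lp.norm_rpow_eq_tsum hp (T f)
    norm_num at h
    exact h
  have hTcont : Continuous T := AddMonoidHomClass.continuous_of_bound T (Real.sqrt B) fun f => by
    rw [← Real.sqrt_sq (norm_nonneg (T f)), hT, ← Real.sqrt_sq (norm_nonneg f),
      ← Real.sqrt_mul' _ (sq_nonneg _)]
    exact Real.sqrt_le_sqrt (hv f).2
  exact ((continuous_norm.comp hTcont).pow 2).congr hT

def FrameBoundsAt (A B : ℝ) (v : ι → H) (f : H) : Prop :=
  Summable (fun i => ‖⟪v i, f⟫_ℂ‖ ^ 2) ∧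
    A * ‖f‖ ^ 2 ≤ ∑' i, ‖⟪v i, f⟫_ℂ‖ ^ 2 ∧ ∑' i, ‖⟪v i, f⟫_ℂ‖ ^ 2 ≤ B * ‖f‖ ^ 2

theorem IsFrame.of_dense {A B : ℝ} {v : ι → H} {s : Set H} (hs : Dense s)
    (h : ∀ f ∈ s, FrameBoundsAt A B v f) : IsFrame A B v := by
  have hv : IsBessel B v := .of_dense hs fun f hf => ⟨(h f hf).1, (h f hf).2.2⟩
  intro f
  refine ⟨(hv f).1, ?_, (hv f).2⟩
  induction f using hs.induction with
  | mem f hf => exact (h f hf).2.1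
  | isClosed => exact isClosed_le (by fun_prop) hv.continuous_tsum

theorem IsFrame.summable_prod_and_bounds {A B : ℝ} {v : ι → H} (hv : IsFrame A B v)
    {κ : Type*} {u : κ → H} (hu : Summable fun k => ‖u k‖ ^ 2) :
    Summable (fun p : κ × ι => ‖⟪v p.2, u p.1⟫_ℂ‖ ^ 2) ∧
      A * ∑' k, ‖u k‖ ^ 2 ≤ ∑' p : κ × ι, ‖⟪v p.2, u p.1⟫_ℂ‖ ^ 2 ∧
      ∑' p : κ × ι, ‖⟪v p.2, u p.1⟫_ℂ‖ ^ 2 ≤ B * ∑' k, ‖u k‖ ^ 2 := by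
  have hrows : Summable fun k => ∑' i, ‖⟪v i, u k⟫_ℂ‖ ^ 2 :=
    (hu.mul_left B).of_nonneg_of_le (fun k => tsum_nonneg fun _ => sq_nonneg _)
      fun k => (hv (u k)).2.2
  have hsum : Summable (fun p : κ × ι => ‖⟪v p.2, u p.1⟫_ℂ‖ ^ 2) :=
    (summable_prod_of_nonneg fun _ => sq_nonneg _).2 ⟨fun k => (hv (u k)).1, hrows⟩
  rw [hsum.tsum_prod' fun k => (hv (u k)).1, ← tsum_mul_left, ← tsum_mul_left]
  exact ⟨hsum, (hu.mul_left A).tsum_le_tsum (fun k => (hv (u k)).2.1) hrows,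
    hrows.tsum_le_tsum (fun k => (hv (u k)).2.2) (hu.mul_left B)⟩

theorem HilbertBasis.hasSum_norm_inner_sq {w : Type*} (e : HilbertBasis w ℂ H) (f : H) :
    HasSum (fun k => ‖⟪e k, f⟫_ℂ‖ ^ 2) (‖f‖ ^ 2) := by
  have h := e.hasSum_inner_mul_inner f f
  simp only [← inner_conj_symm f (e _), RCLike.conj_mul, inner_self_eq_norm_sq_to_K,
    ← RCLike.ofReal_pow] at h
  exact (RCLike.hasSum_ofReal ℂ).1 h

end Frames

section TensorProduct

variable {H₁ H₂ H₃ : Type*}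
  [NormedAddCommGroup H₁] [InnerProductSpace ℂ H₁]
  [NormedAddCommGroup H₂] [InnerProductSpace ℂ H₂]
  [NormedAddCommGroup H₃] [InnerProductSpace ℂ H₃]
  {tmul : H₁ →ₗ[ℂ] H₂ →ₗ[ℂ] H₃}

theorem exists_eq_sum_tmul_of_mem_span {f : H₃}
    (hf : f ∈ Submodule.span ℂ {z | ∃ x y, z = tmul x y}) :
    ∃ (N : ℕ) (x : Fin N → H₁) (y : Fin N → H₂), f = ∑ i, tmul (x i) (y i) := by
  obtain ⟨N, c, v, rfl⟩ := Submodule.mem_span_set'.1 hf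
  choose x y hxy using fun i => (v i).2
  exact ⟨N, fun i => c i • x i, y, Finset.sum_congr rfl fun i _ => by
    rw [map_smul, LinearMap.smul_apply, hxy i]⟩

variable
  (htmul : ∀ (x x' : H₁) (y y' : H₂), ⟪tmul x y, tmul x' y'⟫_ℂ = ⟪x, x'⟫_ℂ * ⟪y, y'⟫_ℂ)
  {ι : Type*} [Fintype ι] (x : ι → H₁) (y : ι → H₂)
include htmul

theorem inner_tmul_sum_eq_inner_left (a : H₁) (b : H₂) :
    ⟪tmul a b, ∑ i, tmul (x i) (y i)⟫_ℂ = ⟪a, ∑ i, ⟪b, y i⟫_ℂ • x i⟫_ℂ := by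
  simp only [inner_sum, inner_smul_right, htmul, mul_comm]

theorem inner_tmul_sum_eq_inner_right (a : H₁) (b : H₂) :
    ⟪tmul a b, ∑ i, tmul (x i) (y i)⟫_ℂ = ⟪b, ∑ i, ⟪a, x i⟫_ℂ • y i⟫_ℂ := by
  simp only [inner_sum, inner_smul_right, htmul]

theorem hasSum_norm_sum_inner_smul_sq {w : Type*} (e : HilbertBasis w ℂ H₂) :
    HasSum (fun k => ‖∑ i, ⟪e k, y i⟫_ℂ • x i‖ ^ 2) (‖∑ i, tmul (x i) (y i)‖ ^ 2) := by
  rw [← RCLike.hasSum_ofReal ℂ]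
  simp only [RCLike.ofReal_pow, ← inner_self_eq_norm_sq_to_K, sum_inner, inner_sum,
    inner_smul_left, inner_smul_right, htmul, inner_conj_symm, Finset.mul_sum]
  refine hasSum_sum fun i _ => hasSum_sum fun j _ => ?_
  exact ((e.hasSum_inner_mul_inner (y j) (y i)).mul_left ⟪x j, x i⟫_ℂ).congr_fun fun k => by ring

theorem frameBoundsAt_sum_tmul [CompleteSpace H₂] {J K : Type*} {A₁ B₁ A₂ B₂ : ℝ}
    {φ : J → H₁} {ψ : K → H₂} (hφ : IsFrame A₁ B₁ φ) (hψ : IsFrame A₂ B₂ ψ)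
    (hA₂ : 0 ≤ A₂) (hB₂ : 0 ≤ B₂) :
    FrameBoundsAt (A₁ * A₂) (B₁ * B₂) (fun p : J × K => tmul (φ p.1) (ψ p.2))
      (∑ i, tmul (x i) (y i)) := by
  obtain ⟨w, e, -⟩ := exists_hilbertBasis ℂ H₂
  set f := ∑ i, tmul (x i) (y i)
  set u : H₂ → H₁ := fun b => ∑ i, ⟪b, y i⟫_ℂ • x i
  set g : H₁ → H₂ := fun a => ∑ i, ⟪a, x i⟫_ℂ • y i
  have hfu (a : H₁) (b : H₂) : ⟪tmul a b, f⟫_ℂ = ⟪a, u b⟫_ℂ :=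
    inner_tmul_sum_eq_inner_left htmul x y a b
  have hfg (a : H₁) (b : H₂) : ⟪tmul a b, f⟫_ℂ = ⟪b, g a⟫_ℂ :=
    inner_tmul_sum_eq_inner_right htmul x y a b
  have hu : HasSum (fun k => ‖u (e k)‖ ^ 2) (‖f‖ ^ 2) :=
    hasSum_norm_sum_inner_smul_sq htmul x y e
  have hg (n : J) : HasSum (fun k => ‖⟪φ n, u (e k)⟫_ℂ‖ ^ 2) (‖g (φ n)‖ ^ 2) := by
    simpa only [← hfg, hfu] using e.hasSum_norm_inner_sq (g (φ n))
  obtain ⟨hF, hF_lower, hF_upper⟩ := hφ.summable_prod_and_bounds hu.summable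
  have hgsum : HasSum (fun n => ‖g (φ n)‖ ^ 2) (∑' p : w × J, ‖⟪φ p.2, u (e p.1)⟫_ℂ‖ ^ 2) :=
    ((Equiv.prodComm J w).hasSum_iff.2 hF.hasSum).prod_fiberwise hg
  obtain ⟨hG, hG_lower, hG_upper⟩ := hψ.summable_prod_and_bounds hgsum.summable
  rw [hu.tsum_eq] at hF_lower hF_upper
  rw [hgsum.tsum_eq] at hG_lower hG_upper
  simp only [FrameBoundsAt, hfg]
  refine ⟨hG, ?_, ?_⟩
  · calc A₁ * A₂ * ‖f‖ ^ 2 = A₂ * (A₁ * ‖f‖ ^ 2) := by ring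
      _ ≤ _ := mul_le_mul_of_nonneg_left hF_lower hA₂
      _ ≤ _ := hG_lower
  · calc _ ≤ _ := hG_upper
      _ ≤ B₂ * (B₁ * ‖f‖ ^ 2) := mul_le_mul_of_nonneg_left hF_upper hB₂
      _ = B₁ * B₂ * ‖f‖ ^ 2 := by ring

end TensorProduct

/-- The completed Hilbert tensor product `H₁ ⊗ H₂` is modelled by `H₃` with a bilinear map `tmul`
satisfying `⟪x ⊗ y, x' ⊗ y'⟫ = ⟪x, x'⟫⟪y, y'⟫` whose elementary tensors span a dense subspace. -/
theorem tensor_frame_general {H₁ H₂ H₃ : Type*}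
    [NormedAddCommGroup H₁] [InnerProductSpace ℂ H₁]
    [NormedAddCommGroup H₂] [InnerProductSpace ℂ H₂] [CompleteSpace H₂]
    [NormedAddCommGroup H₃] [InnerProductSpace ℂ H₃]
    {J K : Type*} (A₁ B₁ A₂ B₂ : ℝ)
    (hA₂ : 0 < A₂) (hAB₂ : A₂ ≤ B₂)
    (tmul : H₁ →ₗ[ℂ] H₂ →ₗ[ℂ] H₃)
    (htmul : ∀ (x x' : H₁) (y y' : H₂),
      (inner ℂ (tmul x y) (tmul x' y') : ℂ) = inner ℂ x x' * inner ℂ y y')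
    (hdense : (Submodule.span ℂ {z : H₃ | ∃ x y, z = tmul x y}).topologicalClosure = ⊤)
    (φ : J → H₁) (ψ : K → H₂)
    (hφ : IsFrame A₁ B₁ φ) (hψ : IsFrame A₂ B₂ ψ) :
    IsFrame (A₁ * A₂) (B₁ * B₂) (fun p : J × K => tmul (φ p.1) (ψ p.2)) := by
  refine IsFrame.of_dense (Submodule.dense_iff_topologicalClosure_eq_top.2 hdense) fun f hf => ?_
  obtain ⟨N, x, y, rfl⟩ := exists_eq_sum_tmul_of_mem_span hf
  exact frameBoundsAt_sum_tmul htmul x y hφ hψ hA₂.le (hA₂.le.trans hAB₂)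

/-- Tensor product of an `(A₁,B₁)`-frame of `H₁` with an `(A₂,B₂)`-frame of `H₂`
is an `(A₁A₂, B₁B₂)`-frame of the Hilbert tensor product `H₁ ⊗ H₂`.  The completed
Hilbert tensor product is encoded as a Hilbert space `H₃` together with a bilinear map
`tmul` satisfying `⟨x ⊗ y, x' ⊗ y'⟩ = ⟨x,x'⟩⟨y,y'⟩` whose elementary tensors span a
dense subspace. -/
theorem tensor_frame {H₁ H₂ H₃ : Type*}
    [NormedAddCommGroup H₁] [InnerProductSpace ℂ H₁] [CompleteSpace H₁]
    [NormedAddCommGroup H₂] [InnerProductSpace ℂ H₂] [CompleteSpace H₂]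
    [NormedAddCommGroup H₃] [InnerProductSpace ℂ H₃] [CompleteSpace H₃]
    {J K : Type*} (A₁ B₁ A₂ B₂ : ℝ)
    (hA₁ : 0 < A₁) (hAB₁ : A₁ ≤ B₁) (hA₂ : 0 < A₂) (hAB₂ : A₂ ≤ B₂)
    (tmul : H₁ →ₗ[ℂ] H₂ →ₗ[ℂ] H₃)
    (htmul : ∀ (x x' : H₁) (y y' : H₂),
      (inner ℂ (tmul x y) (tmul x' y') : ℂ) = inner ℂ x x' * inner ℂ y y')
    (hdense : (Submodule.span ℂ {z : H₃ | ∃ x y, z = tmul x y}).topologicalClosure = ⊤)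
    (φ : J → H₁) (ψ : K → H₂)
    (hφ : IsFrame A₁ B₁ φ) (hψ : IsFrame A₂ B₂ ψ) :
    IsFrame (A₁ * A₂) (B₁ * B₂) (fun p : J × K => tmul (φ p.1) (ψ p.2)) :=
  tensor_frame_general A₁ B₁ A₂ B₂ hA₂ hAB₂ tmul htmul hdense φ ψ hφ hψ
end
end

section
/- The Gabor system { x ↦ e^{2πi m x} g(x − n) : m,n ∈ ℤ }, where g(x) = sin(πx)/(πx) (extended by g(0)=1), is an orthonormal family in L²(ℝ). -/
open MeasureTheory Complex Real

noncomputable section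

abbrev L2R := Lp ℂ 2 (volume : Measure ℝ)

/-- The sinc function `g(x) = sin(πx)/(πx)`, with `g(0) = 1`. -/
def sinc (x : ℝ) : ℝ := if x = 0 then 1 else Real.sin (π * x) / (π * x)

/-! On `(0, 1]` the Fourier coefficients of `t ↦ e^{2πiyt}` are `e^{πi(y-n)} sinc (y - n)`, so
Parseval's identity gives the reproducing formula `∑ₙ sinc (x - n) sinc (y - n) = sinc (y - x)`.
The integral over `ℝ` of `conj g_{m,n} · g_{m',n'}` equals the integral over `(0, 1]` of its
periodization; there the modulations factor out as `e^{2πi(m'-m)x}` and the remaining sum is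
`sinc (n - n') = δ_{nn'}`, while integrating `e^{2πi(m'-m)x}` over `(0, 1]` gives `δ_{mm'}`. -/

open scoped ComplexConjugate
open AddCircle Set

theorem hasSum_prod_fourierCoeff {T : ℝ} [Fact (0 < T)] (f g : Lp ℂ 2 (haarAddCircle (T := T))) :
    HasSum (fun i ↦ conj (fourierCoeff f i) * fourierCoeff g i)
      (∫ t, conj (f t) * g t ∂haarAddCircle) := by
  simp_rw [mul_comm (conj _)]
  refine HasSum.congr_fun (fourierBasis.hasSum_inner_mul_inner f g) (fun n ↦ ?_)
  simp only [← fourierBasis_repr, HilbertBasis.repr_apply_apply, inner_conj_symm,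
    mul_comm (inner ℂ f _)]

theorem hasSum_prod_fourierCoeffOn {a b : ℝ} (hab : a < b) {f g : ℝ → ℂ}
    (hf : MemLp f 2 (volume.restrict (Ioc a b))) (hg : MemLp g 2 (volume.restrict (Ioc a b))) :
    HasSum (fun i ↦ conj (fourierCoeffOn hab f i) * fourierCoeffOn hab g i)
      ((b - a)⁻¹ • ∫ x in a..b, conj (f x) * g x) := by
  have := Fact.mk (sub_pos.2 hab)
  rw [← add_sub_cancel a b] at hf hg
  have hF := hf.memLp_liftIoc.haarAddCircle
  have hG := hg.memLp_liftIoc.haarAddCircle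
  convert hasSum_prod_fourierCoeff hF.toLp hG.toLp using 2
  · simp [fourierCoeff_congr_ae hF.coeFn_toLp, fourierCoeff_congr_ae hG.coeFn_toLp,
      fourierCoeff_liftIoc_eq]
  · nth_rw 2 [← add_sub_cancel a b]
    rw [← integral_liftIoc_eq_intervalIntegral, ← integral_haarAddCircle]
    refine integral_congr_ae ?_
    filter_upwards [hF.coeFn_toLp, hG.coeFn_toLp] with x hFx hGx
    rw [hFx, hGx]
    rfl

theorem integral_eq_intervalIntegral_tsum_comp_add_int {E : Type*} [NormedAddCommGroup E]
    [NormedSpace ℝ E] {f : ℝ → E} (hf : Integrable f) :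
    ∫ x, f x = ∫ x in (0:ℝ)..1, ∑' n : ℤ, f (x + n) := by
  have hsum := hf.hasSum_intervalIntegral_comp_add_int
  have hsum_norm := hf.norm.hasSum_intervalIntegral_comp_add_int
  simp only [intervalIntegral.integral_of_le zero_le_one] at hsum hsum_norm ⊢
  rw [← hsum.tsum_eq]
  exact integral_tsum_of_summable_integral_norm
    (fun n => (hf.comp_add_right (n : ℝ)).integrableOn) hsum_norm.summable

lemma memLp_exp_two_pi_I_mul {μ : Measure ℝ} [IsFiniteMeasure μ] (y : ℝ) (p : ENNReal) :
    MemLp (fun t : ℝ => cexp (2 * π * I * y * t)) p μ := by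
  refine MemLp.of_bound (by fun_prop) 1 (ae_of_all _ fun t => ?_)
  rw [show 2 * π * I * y * t = ((2 * π * y * t : ℝ) : ℂ) * I by push_cast; ring,
    norm_exp_ofReal_mul_I]

lemma sinc_intCast (k : ℤ) : _root_.sinc k = if k = 0 then 1 else 0 := by
  rcases eq_or_ne k 0 with rfl | hk
  · simp [_root_.sinc]
  · simp [_root_.sinc, hk, mul_comm π, Real.sin_int_mul_pi]

lemma integral_exp_eq_sinc (y : ℝ) :
    ∫ t in (0:ℝ)..1, cexp (2 * π * I * y * t) = cexp (π * I * y) * _root_.sinc y := by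
  rcases eq_or_ne y 0 with rfl | hy
  · simp [_root_.sinc]
  have hy' : (y : ℂ) ≠ 0 := by exact_mod_cast hy
  rw [integral_exp_mul_complex (by simp [hy, I_ne_zero]), _root_.sinc, if_neg hy]
  push_cast
  set a := cexp (π * I * y) with ha
  have ha0 : a ≠ 0 := Complex.exp_ne_zero _
  have h2 : cexp (2 * π * I * y * 1) = a * a := by rw [ha, ← Complex.exp_add]; ring_nf
  have h1 : cexp (π * y * I) = a := by rw [ha]; ring_nf
  have hinv : cexp (-(π * y) * I) = a⁻¹ := by rw [neg_mul, Complex.exp_neg, h1]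
  rw [Complex.sin, h2, h1, hinv, mul_zero, Complex.exp_zero]
  field_simp
  linear_combination (a ^ 2 - 1) * I_sq

lemma integral_exp_intCast (k : ℤ) :
    ∫ t in (0:ℝ)..1, cexp (2 * π * I * k * t) = if k = 0 then 1 else 0 := by
  rw [← Complex.ofReal_intCast, integral_exp_eq_sinc, sinc_intCast]
  split_ifs with hk <;> simp [hk]

lemma fourierCoeffOn_exp_two_pi_I_mul (y : ℝ) (n : ℤ) :
    fourierCoeffOn zero_lt_one (fun t : ℝ => cexp (2 * π * I * y * t)) n
      = cexp (π * I * (y - n : ℝ)) * _root_.sinc (y - n) := by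
  rw [fourierCoeffOn_eq_integral, sub_zero, div_one, one_smul, ← integral_exp_eq_sinc]
  refine intervalIntegral.integral_congr fun t _ => ?_
  simp only [fourier_coe_apply, smul_eq_mul, ← Complex.exp_add]
  push_cast
  ring_nf

theorem hasSum_sinc_mul_sinc (x y : ℝ) :
    HasSum (fun n : ℤ => _root_.sinc (x - n) * _root_.sinc (y - n)) (_root_.sinc (y - x)) := by
  have h := hasSum_prod_fourierCoeffOn zero_lt_one
    (memLp_exp_two_pi_I_mul x 2) (memLp_exp_two_pi_I_mul y 2)
  have hterm (n : ℤ) : conj (cexp (π * I * (x - n : ℝ)) * _root_.sinc (x - n)) *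
      (cexp (π * I * (y - n : ℝ)) * _root_.sinc (y - n))
      = cexp (π * I * (y - x : ℝ)) * (_root_.sinc (x - n) * _root_.sinc (y - n) : ℝ) := by
    rw [map_mul, conj_ofReal, ← Complex.exp_conj, mul_mul_mul_comm, ← Complex.exp_add]
    congr 2
    · simp only [map_mul, conj_ofReal, conj_I]
      push_cast
      ring
    · push_cast
      ring
  have hint : ∫ t in (0:ℝ)..1, conj (cexp (2 * π * I * x * t)) * cexp (2 * π * I * y * t)
      = cexp (π * I * (y - x : ℝ)) * _root_.sinc (y - x) := by
    rw [← integral_exp_eq_sinc]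
    refine intervalIntegral.integral_congr fun t _ => ?_
    rw [← Complex.exp_conj, ← Complex.exp_add]
    simp only [map_mul, conj_ofReal, conj_I, map_ofNat]
    push_cast
    ring_nf
  simp only [fourierCoeffOn_exp_two_pi_I_mul, hterm, sub_zero, inv_one, one_smul, hint] at h
  rwa [hasSum_mul_left_iff (Complex.exp_ne_zero _), Complex.hasSum_ofReal] at h

def gabor (m n : ℤ) (x : ℝ) : ℂ := cexp (2 * π * I * m * x) * _root_.sinc (x - n)

lemma conj_gabor_mul_gabor_add_intCast (m n m' n' j : ℤ) (x : ℝ) :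
    conj (gabor m n (x + j)) * gabor m' n' (x + j)
      = cexp (2 * π * I * (m' - m : ℤ) * x) *
          (_root_.sinc (x + j - n) * _root_.sinc (x + j - n') : ℝ) := by
  rw [gabor, gabor, map_mul, conj_ofReal, mul_mul_mul_comm, ← Complex.exp_conj, ← Complex.exp_add]
  have hperiod : conj (2 * π * I * m * ((x + j : ℝ) : ℂ)) + 2 * π * I * m' * ((x + j : ℝ) : ℂ)
      = 2 * π * I * (m' - m : ℤ) * x + ((m' - m) * j : ℤ) * (2 * π * I) := by
    simp only [map_mul, conj_ofReal, conj_I, map_ofNat, map_intCast]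
    push_cast
    ring
  rw [hperiod, Complex.exp_add, Complex.exp_int_mul_two_pi_mul_I, mul_one]
  push_cast
  rfl

lemma tsum_conj_gabor_mul_gabor_add_intCast (m n m' n' : ℤ) (x : ℝ) :
    ∑' j : ℤ, conj (gabor m n (x + j)) * gabor m' n' (x + j)
      = if n = n' then cexp (2 * π * I * (m' - m : ℤ) * x) else 0 := by
  have hsinc : ∑' j : ℤ, _root_.sinc (x + j - n) * _root_.sinc (x + j - n')
      = if n = n' then 1 else 0 := by
    have h := (Equiv.neg ℤ).hasSum_iff.mpr (hasSum_sinc_mul_sinc (x - n) (x - n'))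
    rw [show x - n' - (x - n) = ((n - n' : ℤ) : ℝ) by push_cast; ring, sinc_intCast] at h
    simp only [sub_eq_zero] at h
    convert h.tsum_eq using 3 with j
    simp only [Function.comp_apply, Equiv.neg_apply, Int.cast_neg, sub_neg_eq_add,
      add_sub_right_comm]
  simp_rw [conj_gabor_mul_gabor_add_intCast, tsum_mul_left, ← ofReal_tsum, hsinc]
  split_ifs <;> simp

lemma integral_conj_gabor_mul_gabor {m n m' n' : ℤ}
    (hint : Integrable (fun x => conj (gabor m n x) * gabor m' n' x)) :
    ∫ x, conj (gabor m n x) * gabor m' n' x = if (m, n) = (m', n') then 1 else 0 := by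
  rw [integral_eq_intervalIntegral_tsum_comp_add_int hint]
  simp_rw [tsum_conj_gabor_mul_gabor_add_intCast]
  rcases eq_or_ne n n' with rfl | hn
  · simp only [if_true, integral_exp_intCast, sub_eq_zero, Prod.mk.injEq, and_true, eq_comm]
  · simp [hn]

/-- The Gabor system `{ x ↦ e^{2πi m x} g(x − n) : m, n ∈ ℤ }` with `g = sinc`
is an orthonormal family in `L²(ℝ)`. -/
theorem gabor_sinc_orthonormal (G : ℤ × ℤ → L2R)
    (hG : ∀ m n : ℤ, (G (m, n) : ℝ → ℂ) =ᵐ[volume]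
      fun x => Complex.exp (2 * π * Complex.I * m * x) * (_root_.sinc (x - n) : ℂ)) :
    Orthonormal ℂ G := by
  rw [orthonormal_iff_ite]
  rintro ⟨m, n⟩ ⟨m', n'⟩
  have hae : (fun x => inner ℂ (G (m, n) x) (G (m', n') x)) =ᵐ[volume]
      fun x => conj (gabor m n x) * gabor m' n' x := by
    filter_upwards [hG m n, hG m' n'] with x hx hx'
    rw [RCLike.inner_apply', hx, hx', gabor, gabor]
  rw [L2.inner_def, integral_congr_ae hae]
  exact integral_conj_gabor_mul_gabor ((L2.integrable_inner _ _).congr hae)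
end
end

section
/- Let Ψᵒ(x₁,x₂) = (1/(2π)) χ_{[−π,π]}(x₁) χ_{[−π,π]}(x₂ − x₁). There do not exist measurable functions u, v : ℝ → ℂ such that Ψᵒ(x₁,x₂) = u(x₁) v(x₂) for almost every (x₁,x₂) ∈ ℝ². -/
open MeasureTheory Complex Real

noncomputable section

/-!
If `Ψᵒ = u ⊗ v` almost everywhere, then integrating over rectangles gives
`∫_{S×T} Ψᵒ = (∫_S u)(∫_T v)`, so the rectangle integrals form a matrix of rank at most one.
But for `A = (-π, -π/2)` and `B = (π/2, π)` the function `Ψᵒ` is a positive constant on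
`A × A` and on `B × B`, while it vanishes on `A × B` (there `x₂ - x₁ > π`): the diagonal
entries are nonzero and an off-diagonal one is zero, which rank one forbids.
-/

section RectangleIntegrals

variable {α β L : Type*} [MeasurableSpace α] [MeasurableSpace β] [RCLike L]
  {μ : Measure α} {ν : Measure β} [SFinite μ] [SFinite ν]

theorem setIntegral_prod_eq_mul_of_ae_eq {f : α × β → L} {u : α → L} {v : β → L}
    (h : f =ᵐ[μ.prod ν] fun x => u x.1 * v x.2) (s : Set α) (t : Set β) :
    ∫ x in s ×ˢ t, f x ∂μ.prod ν = (∫ x in s, u x ∂μ) * ∫ y in t, v y ∂ν :=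
  (integral_congr_ae (ae_restrict_of_ae h)).trans (setIntegral_prod_mul u v s t)

theorem not_ae_eq_mul_of_setIntegral_prod {f : α × β → L} {s s' : Set α} {t t' : Set β}
    (hst : ∫ x in s ×ˢ t, f x ∂μ.prod ν ≠ 0) (hst' : ∫ x in s' ×ˢ t', f x ∂μ.prod ν ≠ 0)
    (hst'' : ∫ x in s ×ˢ t', f x ∂μ.prod ν = 0) (u : α → L) (v : β → L) :
    ¬ f =ᵐ[μ.prod ν] fun x => u x.1 * v x.2 := by
  intro h
  simp only [setIntegral_prod_eq_mul_of_ae_eq h] at hst hst' hst''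
  exact mul_ne_zero (left_ne_zero_of_mul hst) (right_ne_zero_of_mul hst') hst''

end RectangleIntegrals

section StripIndicator

def stripIndicator (x : ℝ × ℝ) : ℂ :=
  ((1 / (2 * π) : ℝ) : ℂ) *
    (Set.indicator (Set.Icc (-π) π) (fun _ => (1 : ℂ)) x.1 *
      Set.indicator (Set.Icc (-π) π) (fun _ => (1 : ℂ)) (x.2 - x.1))

theorem stripIndicator_of_mem {x : ℝ × ℝ} (h₁ : x.1 ∈ Set.Icc (-π) π)
    (h₂ : x.2 - x.1 ∈ Set.Icc (-π) π) : stripIndicator x = ((1 / (2 * π) : ℝ) : ℂ) := by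
  simp [stripIndicator, Set.indicator_of_mem h₁, Set.indicator_of_mem h₂]

theorem stripIndicator_of_notMem {x : ℝ × ℝ} (h : x.2 - x.1 ∉ Set.Icc (-π) π) :
    stripIndicator x = 0 := by
  simp [stripIndicator, Set.indicator_of_notMem h]

theorem setIntegral_stripIndicator_square {a b : ℝ} (ha : -π ≤ a) (hab : a ≤ b) (hb : b ≤ π)
    (hba : b - a ≤ π) :
    ∫ x in Set.Ioo a b ×ˢ Set.Ioo a b, stripIndicator x =
      (((b - a) ^ 2 / (2 * π) : ℝ) : ℂ) := by
  have hconst : Set.EqOn stripIndicator (fun _ => ((1 / (2 * π) : ℝ) : ℂ))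
      (Set.Ioo a b ×ˢ Set.Ioo a b) := by
    rintro x ⟨⟨hx₁, hx₁'⟩, hx₂, hx₂'⟩
    exact stripIndicator_of_mem ⟨by linarith, by linarith⟩ ⟨by linarith, by linarith⟩
  rw [setIntegral_congr_fun (measurableSet_Ioo.prod measurableSet_Ioo) hconst,
    setIntegral_const, Measure.volume_eq_prod, measureReal_prod_prod,
    Real.volume_real_Ioo_of_le hab, Complex.real_smul, ← Complex.ofReal_mul]
  congr 1
  ring

theorem setIntegral_stripIndicator_square_ne_zero {a b : ℝ} (ha : -π ≤ a) (hab : a < b)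
    (hb : b ≤ π) (hba : b - a ≤ π) :
    ∫ x in Set.Ioo a b ×ˢ Set.Ioo a b, stripIndicator x ≠ 0 := by
  rw [setIntegral_stripIndicator_square ha hab.le hb hba, Complex.ofReal_ne_zero]
  have := sub_pos.mpr hab
  have := Real.pi_pos
  positivity

theorem setIntegral_stripIndicator_eq_zero {s t : Set ℝ} (h : ∀ x ∈ s, ∀ y ∈ t, π < y - x) :
    ∫ x in s ×ˢ t, stripIndicator x = 0 :=
  setIntegral_eq_zero_of_forall_eq_zero fun x hx =>
    stripIndicator_of_notMem fun hmem => (h x.1 hx.1 x.2 hx.2).not_ge hmem.2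

end StripIndicator

/-- The function `Ψᵒ(x₁,x₂) = (1/(2π)) χ_{[−π,π]}(x₁) χ_{[−π,π]}(x₂ − x₁)` is not
factorizable: there are no measurable `u, v : ℝ → ℂ` with
`Ψᵒ(x₁,x₂) = u(x₁)v(x₂)` for almost every `(x₁,x₂) ∈ ℝ²`. -/
theorem strip_indicator_not_factorizable :
    ¬ ∃ (u v : ℝ → ℂ), Measurable u ∧ Measurable v ∧
      (fun x : ℝ × ℝ =>
          ((1 / (2 * π) : ℝ) : ℂ) *
            (Set.indicator (Set.Icc (-π) π) (fun _ => (1 : ℂ)) x.1 *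
              Set.indicator (Set.Icc (-π) π) (fun _ => (1 : ℂ)) (x.2 - x.1)))
        =ᵐ[(volume : Measure (ℝ × ℝ))] fun x : ℝ × ℝ => u x.1 * v x.2 := by
  rintro ⟨u, v, -, -, h⟩
  have hπ := Real.pi_pos
  have hA : ∫ x in Set.Ioo (-π) (-(π / 2)) ×ˢ Set.Ioo (-π) (-(π / 2)), stripIndicator x ≠ 0 :=
    setIntegral_stripIndicator_square_ne_zero le_rfl (by linarith) (by linarith) (by linarith)
  have hB : ∫ x in Set.Ioo (π / 2) π ×ˢ Set.Ioo (π / 2) π, stripIndicator x ≠ 0 :=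
    setIntegral_stripIndicator_square_ne_zero (by linarith) (by linarith) le_rfl (by linarith)
  have hAB : ∫ x in Set.Ioo (-π) (-(π / 2)) ×ˢ Set.Ioo (π / 2) π, stripIndicator x = 0 :=
    setIntegral_stripIndicator_eq_zero fun x hx y hy => by linarith [hx.2, hy.1]
  exact not_ae_eq_mul_of_setIntegral_prod hA hB hAB u v h
end
end
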